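/- There is no rational formal power series A(t) = Σ_{i≥0} α_i t^i ∈ ℚ[[t]] and threshold N such that for every odd integer i ≥ N one has α_i = 0 if and only if i is prime. -/

import Mathlib

section AuxPolyHelpers
open Polynomial

lemma irred_dvd_X_pow_card_sub_one {F : Type*} [Field F] [Fintype F]
    {f : F[X]} (hf : Irreducible f) (h0 : f.coeff 0 ≠ 0) :
    f ∣ X ^ (Fintype.card F ^ f.natDegree - 1) - 1 := by
  haveI : Fact (Irreducible f) := ⟨hf⟩
  have hfne : f ≠ 0 := hf.ne_zero
  let pb := AdjoinRoot.powerBasis hfne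
  letI : Fintype (AdjoinRoot f) := Module.fintypeOfFintype pb.basis
  have hcard : Fintype.card (AdjoinRoot f) = Fintype.card F ^ f.natDegree := by
    rw [Module.card_fintype pb.basis, Fintype.card_fin]
    congr 1
  have hroot : (AdjoinRoot.root f) ≠ 0 := by
    intro h
    apply h0
    have := AdjoinRoot.mk_self (f := f)
    rw [← AdjoinRoot.aeval_eq] at this
    rw [h] at this
    rw [← coeff_zero_eq_aeval_zero'] at this
    exact (algebraMap F (AdjoinRoot f)).injective (by rw [this, map_zero])
  have hpow : (AdjoinRoot.root f) ^ (Fintype.card F ^ f.natDegree - 1) = 1 := by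
    rw [← hcard]
    exact FiniteField.pow_card_sub_one_eq_one _ hroot
  rw [← AdjoinRoot.mk_eq_zero]
  rw [map_sub, map_pow, map_one, ← AdjoinRoot.aeval_eq, Polynomial.aeval_X, hpow, sub_self]

lemma poly_dvd_X_pow_sub_one {F : Type*} [Field F] [Fintype F]
    {g : F[X]} (hg0 : g.coeff 0 ≠ 0) :
    ∃ T : ℕ, 0 < T ∧ g ∣ X ^ T - 1 ∧
      ∀ r : ℕ, r.Prime → r ∣ T →
        r ∣ Fintype.card F ∨ ∃ k, 1 ≤ k ∧ k ≤ g.natDegree ∧ r ∣ Fintype.card F ^ k - 1 := by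
  classical
  set Fq := Fintype.card F with hFq
  have hF2 : 2 ≤ Fq := Fintype.one_lt_card
  have hg : g ≠ 0 := fun h => hg0 (by simp [h])
  set S := UniqueFactorizationMonoid.normalizedFactors g with hS
  set L := ∏ k ∈ Finset.Icc 1 g.natDegree, (Fq ^ k - 1) with hL
  set s := Multiset.card S with hs
  set p := ringChar F with hpdef
  obtain ⟨m, hp, hcard⟩ := FiniteField.card F p
  haveI : Fact p.Prime := ⟨hp⟩
  -- choose t with s ≤ p ^ t
  have hp2 : 2 ≤ p := hp.two_le
  have hst : s ≤ p ^ s := le_of_lt (Nat.lt_pow_self (n := s) hp2)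
  have hL1 : 1 ≤ L := by
    apply Nat.one_le_iff_ne_zero.mpr
    rw [hL, Finset.prod_ne_zero_iff]
    intro k hk
    have : Fq ^ k ≥ 2 ^ 1 := by
      calc 2^1 ≤ Fq ^ 1 := by simpa using hF2
      _ ≤ Fq ^ k := Nat.pow_le_pow_right (by omega) (Finset.mem_Icc.mp hk).1
    omega
  refine ⟨L * p ^ s, by positivity, ?_, ?_⟩
  · -- divisibility
    have hassoc := UniqueFactorizationMonoid.prod_normalizedFactors hg
    refine dvd_trans hassoc.symm.dvd ?_
    have h1 : S.prod ∣ (X ^ L - 1) ^ s := by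
      have := Multiset.prod_dvd_prod_of_dvd (S := S) id (fun _ => X ^ L - (1: F[X])) ?_
      · simpa [Multiset.map_id, Multiset.map_const', Multiset.prod_replicate] using this
      · intro f hfS
        have hirr : Irreducible f := UniqueFactorizationMonoid.irreducible_of_normalized_factor _ hfS
        have hfdvd : f ∣ g := UniqueFactorizationMonoid.dvd_of_mem_normalizedFactors hfS
        have hf0 : f.coeff 0 ≠ 0 := by
          intro h
          exact hg0 (Polynomial.X_dvd_iff.mp ((Polynomial.X_dvd_iff.mpr h).trans hfdvd))
        have hdeg1 : 1 ≤ f.natDegree := hirr.natDegree_pos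
        have hdegle : f.natDegree ≤ g.natDegree := Polynomial.natDegree_le_of_dvd hfdvd hg
        have h2 : f ∣ X ^ (Fq ^ f.natDegree - 1) - 1 := irred_dvd_X_pow_card_sub_one hirr hf0
        refine h2.trans ?_
        have hdvdL : (Fq ^ f.natDegree - 1) ∣ L :=
          Finset.dvd_prod_of_mem _ (Finset.mem_Icc.mpr ⟨hdeg1, hdegle⟩)
        obtain ⟨c, hc⟩ := hdvdL
        have := sub_dvd_pow_sub_pow (X ^ (Fq ^ f.natDegree - 1) : F[X]) 1 c
        simpa [id, hc, ← pow_mul] using this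
    refine h1.trans ?_
    have h3 : ((X:F[X]) ^ L - 1) ^ s ∣ (X ^ L - 1) ^ (p ^ s) := pow_dvd_pow _ hst
    refine h3.trans ?_
    have h4 : ((X:F[X]) ^ L - 1) ^ (p ^ s) = X ^ (L * p ^ s) - 1 := by
      rw [sub_pow_char_pow (R := F[X])]
      rw [← pow_mul, one_pow]
    rw [h4]
  · intro r hr hrdvd
    rcases (Nat.Prime.dvd_mul hr).mp hrdvd with h | h
    · right
      have := (Prime.dvd_finset_prod_iff hr.prime _).mp h
      obtain ⟨k, hk, hdvd⟩ := this
      exact ⟨k, (Finset.mem_Icc.mp hk).1, (Finset.mem_Icc.mp hk).2, hdvd⟩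
    · left
      have : r ∣ p := hr.dvd_of_dvd_pow h
      show r ∣ Fq
      rw [hFq, hcard]
      exact this.trans (dvd_pow_self p (by simp [m.pos.ne']))
end AuxPolyHelpers

section AuxPeriodicity
open Polynomial PowerSeries

lemma periodic_of_poly_rel {F : Type*} [Field F]
    (B : PowerSeries F) (g : Polynomial F) (hgne : g ≠ 0)
    (M1 : ℕ) (hrel : ∀ n, M1 ≤ n → PowerSeries.coeff (R := F) n ((g : PowerSeries F) * B) = 0)
    (T : ℕ) (hT : 0 < T) (hdvd : g ∣ Polynomial.X ^ T - 1) :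
    ∀ n, M1 ≤ n → PowerSeries.coeff (R := F) (n + T) B = PowerSeries.coeff (R := F) n B := by
  classical
  have coe_sub : ∀ (a b : F[X]), ((a - b : F[X]) : PowerSeries F)
      = (a : PowerSeries F) - (b : PowerSeries F) := by
    intro a b
    apply PowerSeries.ext; intro n
    simp [Polynomial.coeff_coe, Polynomial.coeff_sub, map_sub]
  set PB : F[X] := PowerSeries.trunc M1 ((g : PowerSeries F) * B) with hPBdef
  have hPB : (PB : PowerSeries F) = (g : PowerSeries F) * B := by
    apply PowerSeries.ext; intro n
    rw [Polynomial.coeff_coe, hPBdef, PowerSeries.coeff_trunc]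
    split
    · rfl
    · exact (hrel n (by omega)).symm
  set lc := g.leadingCoeff with hlc
  have hlcne : lc ≠ 0 := leadingCoeff_ne_zero.mpr hgne
  set qh : F[X] := g * Polynomial.C lc⁻¹ with hqh
  have hmonic : qh.Monic := monic_mul_leadingCoeff_inv hgne
  set f : F[X] := PB /ₘ qh with hf
  set gr : F[X] := PB %ₘ qh with hgr
  have heq : gr + qh * f = PB := modByMonic_add_div PB qh
  set f' : F[X] := Polynomial.C lc⁻¹ * f with hf'
  have hqhf : qh * f = g * f' := by rw [hqh, hf']; ring
  obtain ⟨sP, hsP⟩ := hdvd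
  have hsPne : sP ≠ 0 := by
    intro h
    rw [h, mul_zero] at hsP
    have : degree ((Polynomial.X:F[X]) ^ T - 1) = T := by
      simpa using degree_X_pow_sub_C hT (1 : F)
    rw [hsP] at this
    simp at this
  -- power series identity
  have hkey : ((Polynomial.X ^ T - 1 : F[X]) : PowerSeries F) * (B - (f' : PowerSeries F))
      = ((sP * gr : F[X]) : PowerSeries F) := by
    have h1 : (g : PowerSeries F) * B = (g : PowerSeries F) * (f' : PowerSeries F)
        + (gr : PowerSeries F) := by
      rw [← hPB, ← heq]
      have : ((gr + qh * f : F[X]) : PowerSeries F)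
          = (gr : PowerSeries F) + ((qh * f : F[X]) : PowerSeries F) := by
        apply PowerSeries.ext; intro n
        simp [Polynomial.coeff_coe]
      rw [this, hqhf, Polynomial.coe_mul]
      ring
    calc ((Polynomial.X ^ T - 1 : F[X]) : PowerSeries F) * (B - (f' : PowerSeries F))
        = ((g * sP : F[X]) : PowerSeries F) * (B - (f' : PowerSeries F)) := by rw [← hsP]
      _ = (sP : PowerSeries F) * ((g : PowerSeries F) * B
            - (g : PowerSeries F) * (f' : PowerSeries F)) := by
          rw [Polynomial.coe_mul]; ring
      _ = (sP : PowerSeries F) * (gr : PowerSeries F) := by rw [h1]; ring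
      _ = ((sP * gr : F[X]) : PowerSeries F) := by rw [Polynomial.coe_mul]
  -- degree bound
  have hdegqh : qh.degree = g.degree := degree_mul_leadingCoeff_inv g hgne
  have hdeggr : gr.degree < g.degree := hdegqh ▸ degree_modByMonic_lt PB hmonic
  have hdegprod : (sP * gr).degree < (T : WithBot ℕ) := by
    rw [degree_mul]
    have h2 : sP.degree + gr.degree < sP.degree + g.degree :=
      WithBot.add_lt_add_left (degree_ne_bot.mpr hsPne) hdeggr
    have h3 : sP.degree + g.degree = (T : WithBot ℕ) := by
      rw [add_comm, ← degree_mul, ← hsP]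
      simpa using degree_X_pow_sub_C hT (1 : F)
    rw [h3] at h2; exact h2
  -- coefficient extraction
  intro n hn
  have hco : PowerSeries.coeff (R := F) (n + T) (((Polynomial.X ^ T - 1 : F[X]) : PowerSeries F)
      * (B - (f' : PowerSeries F))) = 0 := by
    rw [hkey, Polynomial.coeff_coe]
    apply coeff_eq_zero_of_degree_lt
    refine lt_of_lt_of_le hdegprod ?_
    have : (T:ℕ) ≤ n + T := Nat.le_add_left T n
    exact_mod_cast this
  have hexp : ((Polynomial.X ^ T - 1 : F[X]) : PowerSeries F)
      = (PowerSeries.X : PowerSeries F) ^ T - 1 := by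
    rw [coe_sub, Polynomial.coe_pow, Polynomial.coe_X, Polynomial.coe_one]
  rw [hexp] at hco
  have hXmul : PowerSeries.coeff (R := F) (n + T)
      ((PowerSeries.X ^ T) * (B - (f' : PowerSeries F)))
      = PowerSeries.coeff (R := F) n (B - (f' : PowerSeries F)) := by
    simpa using PowerSeries.coeff_X_pow_mul (B - (f' : PowerSeries F)) T n
  rw [sub_mul, one_mul, map_sub, hXmul] at hco
  -- f' coefficients vanish at ≥ M1
  have hdegf' : f'.degree < (M1 : WithBot ℕ) := by
    calc f'.degree ≤ f.degree := by
          rw [hf']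
          refine le_trans (degree_mul_le _ _) ?_
          calc (Polynomial.C lc⁻¹).degree + f.degree ≤ 0 + f.degree :=
                add_le_add degree_C_le le_rfl
            _ = f.degree := zero_add _
      _ ≤ PB.degree := degree_divByMonic_le _ _
      _ < M1 := degree_trunc_lt _ _
  have hcv : ∀ m, M1 ≤ m → f'.coeff m = 0 := by
    intro m hm
    apply coeff_eq_zero_of_degree_lt
    exact lt_of_lt_of_le hdegf' (by exact_mod_cast Nat.cast_le.mpr hm)
  have e1 : PowerSeries.coeff (R := F) n (B - (f' : PowerSeries F)) = PowerSeries.coeff (R := F) n B := by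
    rw [map_sub, Polynomial.coeff_coe, hcv n hn, sub_zero]
  have e2 : PowerSeries.coeff (R := F) (n + T) (B - (f' : PowerSeries F))
      = PowerSeries.coeff (R := F) (n + T) B := by
    rw [map_sub, Polynomial.coeff_coe, hcv (n + T) (by omega), sub_zero]
  rw [e1, e2] at hco
  exact (sub_eq_zero.mp hco).symm
end AuxPeriodicity

open PowerSeries

/-- A formal power series `f ∈ ℚ[[t]]` is rational if `q·f = p` for some
polynomials `p, q` with `q ≠ 0`. -/
def IsRationalPowerSeries (f : PowerSeries ℚ) : Prop :=
  ∃ p q : Polynomial ℚ, q ≠ 0 ∧ (q : PowerSeries ℚ) * f = (p : PowerSeries ℚ)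

lemma rat_mul_den_int (x : ℚ) (n : ℕ) (h : x.den ∣ n) : ∃ z : ℤ, (z : ℚ) = x * n := by
  obtain ⟨t, ht⟩ := h
  refine ⟨x.num * t, ?_⟩
  have hd : (x.den : ℚ) ≠ 0 := by
    exact_mod_cast x.den_ne_zero
  have hx : (x.num : ℚ) = x * x.den := by
    exact (Rat.mul_den_eq_num x).symm
  push_cast [ht, hx]
  ring

lemma exists_rat_recurrence (A : PowerSeries ℚ) (hA : IsRationalPowerSeries A) :
    ∃ (d M : ℕ) (c : ℕ → ℚ), c 0 ≠ 0 ∧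
      (∀ m, M ≤ m →
        ∑ i ∈ Finset.range (d+1), c i * PowerSeries.coeff (R := ℚ) (m + d - i) A = 0) := by
  obtain ⟨p, q, hq, hpq⟩ := hA
  set k := q.natTrailingDegree with hk
  set d := q.natDegree - k with hd
  have hkd : k + d = q.natDegree := by
    have : k ≤ q.natDegree := Polynomial.natTrailingDegree_le_natDegree q
    omega
  refine ⟨d, p.natDegree + 1, fun i => q.coeff (k + i), ?_, ?_⟩
  · intro h0
    simp only [add_zero] at h0
    apply hq
    rw [← Polynomial.trailingCoeff_eq_zero, Polynomial.trailingCoeff, ← hk]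
    exact h0
  · intro m hm
    have hn : m + d + k = m + d + k := rfl
    have hcoeff : PowerSeries.coeff (R := ℚ) (m + d + k) ((q : PowerSeries ℚ) * A) = 0 := by
      rw [hpq, Polynomial.coeff_coe]
      apply Polynomial.coeff_eq_zero_of_natDegree_lt
      omega
    rw [PowerSeries.coeff_mul] at hcoeff
    rw [Finset.Nat.sum_antidiagonal_eq_sum_range_succ_mk] at hcoeff
    simp only [Polynomial.coeff_coe] at hcoeff
    set S : Finset ℕ := (Finset.range (d+1)).image (fun i => k + i) with hS
    have hsub : S ⊆ Finset.range (m + d + k + 1) := by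
      intro x hx
      simp only [hS, Finset.mem_image, Finset.mem_range] at hx ⊢
      obtain ⟨i, hi, rfl⟩ := hx
      omega
    have hvanish : ∀ x ∈ Finset.range (m + d + k + 1), x ∉ S →
        q.coeff x * PowerSeries.coeff (R := ℚ) (m + d + k - x) A = 0 := by
      intro x hx hxS
      have hq0 : q.coeff x = 0 := by
        rcases lt_or_ge x k with h | h
        · exact Polynomial.coeff_eq_zero_of_lt_natTrailingDegree h
        · rcases le_or_gt x (k + d) with h2 | h2
          · exfalso
            apply hxS
            simp only [hS, Finset.mem_image, Finset.mem_range]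
            exact ⟨x - k, by omega, by omega⟩
          · exact Polynomial.coeff_eq_zero_of_natDegree_lt (by omega)
      rw [hq0, zero_mul]
    have heq : ∑ x ∈ Finset.range (m + d + k + 1), q.coeff x * PowerSeries.coeff (R := ℚ) (m + d + k - x) A
        = ∑ x ∈ S, q.coeff x * PowerSeries.coeff (R := ℚ) (m + d + k - x) A :=
      (Finset.sum_subset hsub hvanish).symm
    rw [heq] at hcoeff
    rw [hS, Finset.sum_image (by intro a _ b _ h; simp only at h; omega)] at hcoeff
    calc ∑ i ∈ Finset.range (d+1), q.coeff (k + i) * PowerSeries.coeff (R := ℚ) (m + d - i) A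
        = ∑ i ∈ Finset.range (d+1), q.coeff (k + i) * PowerSeries.coeff (R := ℚ) (m + d + k - (k + i)) A := by
          apply Finset.sum_congr rfl
          intro i hi
          simp only [Finset.mem_range] at hi
          have hidx : m + d + k - (k + i) = m + d - i := by omega
          rw [hidx]
      _ = 0 := hcoeff

lemma exists_int_recurrence (A : PowerSeries ℚ) (hA : IsRationalPowerSeries A) :
    ∃ (d M : ℕ) (E β : ℕ → ℤ), E 0 ≠ 0 ∧
      (∀ n, β n = 0 ↔ PowerSeries.coeff (R := ℚ) n A = 0) ∧
      (∀ n, M ≤ n → ∑ i ∈ Finset.range (d+1), E i * β (n - i) = 0) := by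
  classical
  obtain ⟨d, M0, c, hc0, hrel⟩ := exists_rat_recurrence A hA
  set a : ℕ → ℚ := fun n => PowerSeries.coeff (R := ℚ) n A with ha
  set L : ℕ := ∏ i ∈ Finset.range (d+1), (c i).den with hLdef
  have hCZ : ∀ i, i < d + 1 → ∃ z : ℤ, (z : ℚ) = c i * L := fun i hi =>
    rat_mul_den_int (c i) L (Finset.dvd_prod_of_mem _ (Finset.mem_range.mpr hi))
  choose CZ hCZspec using hCZ
  set C : ℕ → ℤ := fun i => if h : i < d + 1 then CZ i h else 0 with hCdef
  have hCspec : ∀ i, i < d + 1 → (C i : ℚ) = c i * L := by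
    intro i hi
    simp only [hCdef, dif_pos hi]
    exact hCZspec i hi
  have hLne : (L : ℚ) ≠ 0 := by
    have : 0 < L := Finset.prod_pos (fun i _ => (c i).pos)
    exact_mod_cast this.ne'
  have hC0Q : (C 0 : ℚ) ≠ 0 := by
    rw [hCspec 0 (by omega)]
    exact mul_ne_zero hc0 hLne
  have hC0 : C 0 ≠ 0 := fun h => hC0Q (by rw [h, Int.cast_zero])
  have hrelC : ∀ m, M0 ≤ m →
      ∑ i ∈ Finset.range (d+1), (C i : ℚ) * a (m + d - i) = 0 := by
    intro m hm
    have h2 : ∑ i ∈ Finset.range (d+1), (C i : ℚ) * a (m + d - i)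
        = (L : ℚ) * ∑ i ∈ Finset.range (d+1), c i * a (m + d - i) := by
      rw [Finset.mul_sum]
      apply Finset.sum_congr rfl
      intro i hi
      rw [hCspec i (Finset.mem_range.mp hi)]
      ring
    rw [h2, hrel m hm, mul_zero]
  set D : ℕ := ∏ n ∈ Finset.range (M0 + d + 1), (((C 0 : ℚ) ^ n * a n).den) with hDdef
  have hDQ : (D : ℚ) ≠ 0 := by
    have : 0 < D := Finset.prod_pos (fun i _ => Rat.pos _)
    exact_mod_cast this.ne'
  have hint : ∀ n, ∃ z : ℤ, (z : ℚ) = (D : ℚ) * (C 0 : ℚ) ^ n * a n := by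
    intro n
    induction n using Nat.strong_induction_on with
    | _ n ih =>
      rcases lt_or_ge n (M0 + d + 1) with hn | hn
      · obtain ⟨z, hz⟩ := rat_mul_den_int ((C 0 : ℚ) ^ n * a n) D
          (Finset.dvd_prod_of_mem _ (Finset.mem_range.mpr hn))
        exact ⟨z, by rw [hz]; ring⟩
      · have hm : M0 ≤ n - d := by omega
        have hrec := hrelC (n - d) hm
        have hnd : n - d + d = n := by omega
        rw [hnd, Finset.sum_range_succ'] at hrec
        simp only [Nat.sub_zero] at hrec
        have hCa : (C 0 : ℚ) * a n = - ∑ i ∈ Finset.range d, (C (i+1) : ℚ) * a (n - (i+1)) := by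
          linarith [hrec]
        choose z hz using fun (i : ℕ) (hi : i ∈ Finset.range d) =>
          ih (n - 1 - i) (by simp only [Finset.mem_range] at hi; omega)
        refine ⟨-∑ i ∈ (Finset.range d).attach, C (i.1 + 1) * C 0 ^ i.1 * z i.1 i.2, ?_⟩
        push_cast
        have h1 : ∀ (i : {x // x ∈ Finset.range d}),
            (C (i.1+1) : ℚ) * (C 0 : ℚ) ^ i.1 * (z i.1 i.2 : ℚ)
            = (C (i.1+1) : ℚ) * ((D : ℚ) * (C 0 : ℚ) ^ (n-1) * a (n - (i.1+1))) := by
          intro i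
          have hi := Finset.mem_range.mp i.2
          rw [hz i.1 i.2]
          rw [show n - 1 - i.1 = n - (i.1 + 1) from by omega]
          have hpow : (C 0 : ℚ) ^ i.1 * (C 0 : ℚ) ^ (n - (i.1+1)) = (C 0 : ℚ) ^ (n-1) := by
            rw [← pow_add]
            congr 1
            omega
          calc (C (i.1+1) : ℚ) * (C 0:ℚ) ^ i.1 * ((D:ℚ) * (C 0:ℚ) ^ (n - (i.1+1)) * a (n - (i.1+1)))
              = (C (i.1+1) : ℚ) * ((D:ℚ) * ((C 0:ℚ) ^ i.1 * (C 0:ℚ) ^ (n - (i.1+1))) * a (n - (i.1+1))) := by ring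
            _ = (C (i.1+1) : ℚ) * ((D : ℚ) * (C 0 : ℚ) ^ (n-1) * a (n - (i.1+1))) := by rw [hpow]
        rw [Finset.sum_congr rfl (fun i _ => h1 i)]
        rw [Finset.sum_attach (Finset.range d)
          (fun i => (C (i+1) : ℚ) * ((D : ℚ) * (C 0 : ℚ) ^ (n-1) * a (n - (i+1))))]
        have h3 : ∑ i ∈ Finset.range d, (C (i+1) : ℚ) * ((D:ℚ) * (C 0:ℚ) ^ (n-1) * a (n - (i+1)))
            = (D:ℚ) * (C 0:ℚ) ^ (n-1) * ∑ i ∈ Finset.range d, (C (i+1) : ℚ) * a (n - (i+1)) := by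
          rw [Finset.mul_sum]
          apply Finset.sum_congr rfl
          intro i _
          ring
        rw [h3]
        have h4 : (D:ℚ) * (C 0:ℚ) ^ n * a n
            = (D:ℚ) * (C 0:ℚ) ^ (n-1) * ((C 0:ℚ) * a n) := by
          have : (C 0:ℚ) ^ n = (C 0:ℚ) ^ (n-1) * (C 0:ℚ) := by
            rw [← pow_succ]
            congr 1
            omega
          rw [this]
          ring
        rw [h4, hCa]
        ring
  choose β hβ using hint
  refine ⟨d, M0 + d, fun i => C i * C 0 ^ i, β, ?_, ?_, ?_⟩
  · simpa using hC0
  · intro n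
    constructor
    · intro h
      have := hβ n
      rw [h, Int.cast_zero] at this
      have h2 := this.symm
      rcases mul_eq_zero.mp h2 with h3 | h3
      · exfalso
        rcases mul_eq_zero.mp h3 with h4 | h4
        · exact hDQ h4
        · exact pow_ne_zero n hC0Q h4
      · exact h3
    · intro h
      have := hβ n
      have h' : a n = 0 := h
      rw [h', mul_zero] at this
      exact_mod_cast this
  · intro n hn
    have hcast : ((∑ i ∈ Finset.range (d+1), C i * C 0 ^ i * β (n - i) : ℤ) : ℚ) = 0 := by
      push_cast
      have h1 : ∀ i ∈ Finset.range (d+1),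
          (C i : ℚ) * (C 0:ℚ) ^ i * (β (n-i) : ℚ)
          = (D:ℚ) * (C 0:ℚ) ^ n * ((C i : ℚ) * a (n-i)) := by
        intro i hi
        have hi' := Finset.mem_range.mp hi
        rw [hβ (n-i)]
        have hpow : (C 0:ℚ) ^ i * (C 0:ℚ) ^ (n-i) = (C 0:ℚ) ^ n := by
          rw [← pow_add]
          congr 1
          omega
        calc (C i : ℚ) * (C 0:ℚ) ^ i * ((D:ℚ) * (C 0:ℚ) ^ (n-i) * a (n-i))
            = (D:ℚ) * ((C 0:ℚ) ^ i * (C 0:ℚ) ^ (n-i)) * ((C i:ℚ) * a (n-i)) := by ring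
          _ = (D:ℚ) * (C 0:ℚ) ^ n * ((C i:ℚ) * a (n-i)) := by rw [hpow]
      rw [Finset.sum_congr rfl h1, ← Finset.mul_sum]
      have h2 := hrelC (n - d) (by omega)
      have hnd : n - d + d = n := by omega
      rw [hnd] at h2
      rw [h2]
      ring
    exact_mod_cast hcast

/-- There is no rational power series whose coefficients at odd indices `i ≥ N`
vanish exactly at the primes. -/
theorem no_rational_power_series_detecting_odd_primes :
    ¬ ∃ (A : PowerSeries ℚ) (N : ℕ), IsRationalPowerSeries A ∧
      ∀ i : ℕ, N ≤ i → Odd i →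
        (PowerSeries.coeff (R := ℚ) i A = 0 ↔ Nat.Prime i) := by
  rintro ⟨A, N, hrat, hch⟩
  obtain ⟨d, M, E, β, hE0, hβ0, hrec⟩ := exists_int_recurrence A hrat
  set M1 := M + N + d + 2 with hM1
  obtain ⟨r, hrge, hrprime⟩ := Nat.exists_infinite_primes (M1 + d + 3)
  have hr3 : 3 ≤ r := by omega
  have hrodd : Odd r := hrprime.odd_of_ne_two (by omega)
  set i0 := r * r with hi0
  have hrr : r ≤ i0 := Nat.le_mul_of_pos_left r (by omega)
  have hi0odd : Odd i0 := hrodd.mul hrodd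
  have hi0N : N ≤ i0 := by omega
  have hi0M1 : M1 ≤ i0 := by omega
  have hi0np : ¬ i0.Prime := by
    intro hp
    rcases Nat.prime_mul_iff.mp (hi0 ▸ hp) with ⟨_, h⟩ | ⟨_, h⟩ <;> omega
  have hai0 : PowerSeries.coeff (R := ℚ) i0 A ≠ 0 := fun h => hi0np ((hch i0 hi0N hi0odd).mp h)
  have hβi0 : β i0 ≠ 0 := fun h => hai0 ((hβ0 i0).mp h)
  haveI : Fact r.Prime := ⟨hrprime⟩
  obtain ⟨g, hg⟩ := IsCyclic.exists_generator (α := (ZMod r)ˣ)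
  have hordg : orderOf g = r - 1 := by
    rw [orderOf_eq_card_of_forall_mem_zpowers hg, Nat.card_eq_fintype_card, ZMod.card_units]
  set bound1 := (E 0 * β i0).natAbs + r + d + M1 + 2 with hbound1
  obtain ⟨ℓ, hℓgt, hℓprime, hℓmod⟩ :=
    Nat.forall_exists_prime_gt_and_eq_mod (a := ((g : (ZMod r)ˣ) : ZMod r)) g.isUnit bound1
  haveI : Fact ℓ.Prime := ⟨hℓprime⟩
  have hordℓ : orderOf ((ℓ : ℕ) : ZMod r) = r - 1 := by
    rw [hℓmod, orderOf_units, hordg]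
  have hEβ : (E 0 * β i0) ≠ 0 := mul_ne_zero hE0 hβi0
  have hℓndvd : ¬ ((ℓ : ℤ) ∣ E 0 * β i0) := by
    intro h
    have h1 : ℓ ∣ (E 0 * β i0).natAbs := by
      have := Int.natAbs_dvd_natAbs.mpr h
      simpa using this
    have h2 : ℓ ≤ (E 0 * β i0).natAbs :=
      Nat.le_of_dvd (Int.natAbs_pos.mpr hEβ) h1
    omega
  have hℓE0 : ¬ ((ℓ : ℤ) ∣ E 0) := fun h => hℓndvd (h.mul_right _)
  have hℓβ : ¬ ((ℓ : ℤ) ∣ β i0) := fun h => hℓndvd (h.mul_left _)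
  -- the polynomial over ZMod ℓ
  set F := ZMod ℓ with hF
  set Eb : ℕ → F := fun i => ((E i : ℤ) : F) with hEb
  set qt : Polynomial F := ∑ i ∈ Finset.range (d+1), Polynomial.monomial i (Eb i) with hqt
  have hqtcoeff : ∀ j, qt.coeff j = if j < d + 1 then Eb j else 0 := by
    intro j
    rw [hqt, Polynomial.finset_sum_coeff]
    simp only [Polynomial.coeff_monomial]
    rw [Finset.sum_ite_eq' (Finset.range (d+1)) j Eb]
    simp [Finset.mem_range]
  have hqt0 : qt.coeff 0 ≠ 0 := by
    rw [hqtcoeff 0, if_pos (by omega)]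
    intro h
    exact hℓE0 ((ZMod.intCast_zmod_eq_zero_iff_dvd _ _).mp h)
  have hqtne : qt ≠ 0 := fun h => hqt0 (by rw [h, Polynomial.coeff_zero])
  have hqtdeg : qt.natDegree ≤ d := by
    rw [hqt]
    apply Polynomial.natDegree_sum_le_of_forall_le
    intro i hi
    exact le_trans (Polynomial.natDegree_monomial_le _) (by
      simp only [Finset.mem_range] at hi; omega)
  set bb : ℕ → F := fun n => ((β n : ℤ) : F) with hbb
  set B : PowerSeries F := PowerSeries.mk bb with hB
  have hrelF : ∀ n, M1 ≤ n → PowerSeries.coeff (R := F) n ((qt : PowerSeries F) * B) = 0 := by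
    intro n hn
    rw [PowerSeries.coeff_mul, Finset.Nat.sum_antidiagonal_eq_sum_range_succ_mk]
    simp only [Polynomial.coeff_coe, hB, PowerSeries.coeff_mk]
    have hsub : Finset.range (d+1) ⊆ Finset.range (n+1) := by
      intro x hx
      simp only [Finset.mem_range] at hx ⊢
      omega
    rw [← Finset.sum_subset hsub (by
      intro x hx hxs
      simp only [Finset.mem_range] at hx hxs
      rw [hqtcoeff x, if_neg (by omega), zero_mul])]
    have hterm : ∀ i ∈ Finset.range (d+1),
        qt.coeff i * bb (n - i) = ((E i * β (n-i) : ℤ) : F) := by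
      intro i hi
      simp only [Finset.mem_range] at hi
      rw [hqtcoeff i, if_pos hi]
      push_cast [hEb, hbb]
      exact (Int.cast_mul (α := F) (E i) (β (n-i))).symm
    rw [Finset.sum_congr rfl hterm, ← Int.cast_sum]
    rw [hrec n (by omega)]
    exact Int.cast_zero
  -- period T
  obtain ⟨T, hTpos, hTdvd, hTfac⟩ := poly_dvd_X_pow_sub_one hqt0
  have hcardF : Fintype.card F = ℓ := ZMod.card ℓ
  have hper := periodic_of_poly_rel B qt hqtne M1 hrelF T hTpos hTdvd
  have hiter : ∀ (j n : ℕ), M1 ≤ n → bb (n + j * T) = bb n := by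
    intro j
    induction j with
    | zero => intro n hn; simp
    | succ j ih =>
      intro n hn
      have h1 : n + (j+1) * T = (n + j * T) + T := by ring
      rw [h1]
      have h2 := hper (n + j * T) (by omega)
      simp only [hB, PowerSeries.coeff_mk] at h2
      rw [h2]
      exact ih n hn
  -- r does not divide T
  have hrT : ¬ r ∣ T := by
    intro hrd
    rcases hTfac r hrprime hrd with h | ⟨k, hk1, hkd, hkdvd⟩
    · rw [hcardF] at h
      have hrℓ : r = ℓ := (Nat.prime_dvd_prime_iff_eq hrprime hℓprime).mp h
      have h0 : ((ℓ : ℕ) : ZMod r) = 0 := by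
        rw [← hrℓ, ZMod.natCast_self]
      rw [hℓmod] at h0
      exact Units.ne_zero g h0
    · rw [hcardF] at hkdvd
      have h1 : ℓ ^ k ≡ 1 [MOD r] :=
        (Nat.modEq_iff_dvd' (Nat.one_le_pow _ _ hℓprime.pos)).mpr hkdvd |>.symm
      have h2 : ((ℓ ^ k : ℕ) : ZMod r) = ((1 : ℕ) : ZMod r) :=
        (ZMod.natCast_eq_natCast_iff _ _ _).mpr h1
      push_cast at h2
      have h3 : orderOf ((ℓ : ℕ) : ZMod r) ∣ k := orderOf_dvd_of_pow_eq_one h2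
      rw [hordℓ] at h3
      have h4 := Nat.le_of_dvd (by omega) h3
      omega
  -- coprimality and Dirichlet 2
  have hr2T : ¬ r ∣ 2 * T := by
    intro h
    rcases (Nat.Prime.dvd_mul hrprime).mp h with h | h
    · have := Nat.le_of_dvd (by omega) h
      omega
    · exact hrT h
  have hcopr : Nat.Coprime r (2 * T) := (Nat.Prime.coprime_iff_not_dvd hrprime).mpr hr2T
  have hcop : Nat.Coprime i0 (2 * T) := by
    rw [hi0]
    exact hcopr.mul hcopr
  haveI : NeZero (2 * T) := ⟨by omega⟩
  have hiu : IsUnit ((i0 : ℕ) : ZMod (2 * T)) := by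
    rw [← ZMod.coe_unitOfCoprime i0 hcop]
    exact (ZMod.unitOfCoprime i0 hcop).isUnit
  obtain ⟨P, hPgt, hPprime, hPmod⟩ :=
    Nat.forall_exists_prime_gt_and_eq_mod hiu (i0 + N + M1 + 2)
  have hPi0 : P ≡ i0 [MOD 2 * T] := (ZMod.natCast_eq_natCast_iff _ _ _).mp hPmod
  have hdvdPi : 2 * T ∣ P - i0 := (Nat.modEq_iff_dvd' (by omega)).mp hPi0.symm
  obtain ⟨cc, hcc⟩ := hdvdPi
  have hPe : P = i0 + (2 * cc) * T := by
    have h1 : P = i0 + 2 * T * cc := by omega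
    rw [h1]; ring
  have hPodd : Odd P := hPprime.odd_of_ne_two (by omega)
  have haP : PowerSeries.coeff (R := ℚ) P A = 0 := (hch P (by omega) hPodd).mpr hPprime
  have hβP : β P = 0 := (hβ0 P).mpr haP
  have hbbP : bb P = 0 := by
    rw [hbb]
    simp only [hβP, Int.cast_zero]
  have hbbeq : bb P = bb i0 := by
    rw [hPe]
    exact hiter (2 * cc) i0 hi0M1
  have hbbi0 : bb i0 = 0 := by rw [← hbbeq, hbbP]
  have : (ℓ : ℤ) ∣ β i0 := by
    rw [hbb] at hbbi0
    exact (ZMod.intCast_zmod_eq_zero_iff_dvd _ _).mp hbbi0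
  exact hℓβ this
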